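/- arXiv:2412.18132 — 2 statements merged into one kernel-verified Lean document; each statement's English description precedes it below -/
import Mathlib

section
/- Let A ⊆ Z_n × Z_n and let h, h' ∈ Z_n × Z_n generate the same cyclic subgroup. Then 1̂_A^{sym}(h) = 0 implies 1̂_A^{sym}(h') = 0. -/
open Complex
open scoped Classical

/-- The character value `e^{2πi t/n}` for `t : ZMod n`. -/
noncomputable def charVal (n : ℕ) (t : ZMod n) : ℂ :=
  Complex.exp (2 * Real.pi * Complex.I * (t.val : ℂ) / (n : ℂ))

/-- The symplectic form `⟨x,y⟩ = x₁y₂ - x₂y₁` on `ZMod n × ZMod n`. -/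
def sympForm {n : ℕ} (x y : ZMod n × ZMod n) : ZMod n :=
  x.1 * y.2 - x.2 * y.1

/-- Symplectic Fourier transform of the indicator of `A`. -/
noncomputable def symFT {n : ℕ} (A : Set (ZMod n × ZMod n)) (ξ : ZMod n × ZMod n) : ℂ :=
  ∑ᶠ a ∈ A, charVal n (sympForm a ξ)

/-- Euclidean Fourier transform of the indicator of `A`. -/
noncomputable def euclFT {n : ℕ} (A : Set (ZMod n × ZMod n)) (ξ : ZMod n × ZMod n) : ℂ :=
  ∑ᶠ a ∈ A, charVal n (a.1 * ξ.1 + a.2 * ξ.2)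

/-- Difference set `ΔA = {a - a' : a,a' ∈ A, a ≠ a'}`. -/
def diffSet {G : Type*} [AddGroup G] (A : Set G) : Set G :=
  {d | ∃ a ∈ A, ∃ a' ∈ A, a ≠ a' ∧ d = a - a'}

/-- `A ⊕ B = G`: every element of `G` is uniquely a sum `a + b` with `a ∈ A`, `b ∈ B`. -/
def IsTilingPair {G : Type*} [AddCommGroup G] (A B : Set G) : Prop :=
  ∀ g : G, ∃! p : G × G, p.1 ∈ A ∧ p.2 ∈ B ∧ p.1 + p.2 = g

/-- Symplectic orthogonal set `H^{⊥s}`. -/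
def sympPerp {n : ℕ} (H : Set (ZMod n × ZMod n)) : Set (ZMod n × ZMod n) :=
  {g | ∀ h ∈ H, sympForm g h = 0}

/-- `(A,S)` is a symplectic spectral pair: `|A| = |S|` and `ΔS ⊆ Z(1̂_A^{sym})`. -/
def IsSympSpectralPair {n : ℕ} (A S : Set (ZMod n × ZMod n)) : Prop :=
  Nat.card A = Nat.card S ∧ ∀ s ∈ S, ∀ s' ∈ S, s ≠ s' → symFT A (s - s') = 0

/-! If `h` and `h'` generate the same cyclic subgroup then `h' = k • h` with `k` coprime to `n`.
Writing `ζ = e^{2πi/n}`, the value `1̂_A^{sym}(h)` is `P(ζ)` for a rational polynomial `P`, and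
`1̂_A^{sym}(k • h) = P(ζ^k)`. If `P(ζ) = 0` then the cyclotomic polynomial `Φ_n`, the minimal
polynomial of `ζ` over `ℚ`, divides `P`; since `ζ^k` is again a primitive `n`-th root of unity,
`P(ζ^k) = 0`. -/

open Polynomial

/- The exponent is a priori only a unit modulo `addOrderOf x`; it is lifted to a unit modulo `n`
through the surjection `(ZMod n)ˣ → (ZMod (addOrderOf x))ˣ`. -/
theorem exists_coprime_nsmul_eq_of_zmultiples_eq {G : Type*} [AddGroup G] {n : ℕ} [NeZero n]
    {x y : G} (hn : n • x = 0) (hxy : AddSubgroup.zmultiples x = AddSubgroup.zmultiples y) :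
    ∃ k : ℕ, k.Coprime n ∧ y = k • x := by
  obtain ⟨a, rfl⟩ := AddSubgroup.mem_zmultiples_iff.mp (hxy ▸ AddSubgroup.mem_zmultiples y)
  obtain ⟨b, hb⟩ := AddSubgroup.mem_zmultiples_iff.mp (hxy.symm ▸ AddSubgroup.mem_zmultiples x)
  have hunit : IsUnit (a : ZMod (addOrderOf x)) := by
    have hba : ((b * a : ℤ) : ZMod (addOrderOf x)) = ((1 : ℤ) : ZMod (addOrderOf x)) := by
      rw [ZMod.intCast_eq_intCast_iff, ← zsmul_eq_zsmul_iff_modEq, mul_zsmul, hb, one_zsmul]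
    push_cast at hba
    exact IsUnit.of_mul_eq_one_right _ hba
  obtain ⟨v, hv⟩ := ZMod.unitsMap_surjective (addOrderOf_dvd_of_nsmul_eq_zero hn) hunit.unit
  refine ⟨(v : ZMod n).val, ZMod.val_coe_unit_coprime v, ?_⟩
  have hva : (((v : ZMod n).val : ℤ) : ZMod (addOrderOf x)) = (a : ZMod (addOrderOf x)) := by
    have := congrArg Units.val hv
    rw [ZMod.unitsMap_val, ZMod.cast_eq_val] at this
    exact_mod_cast this
  rw [← natCast_zsmul, zsmul_eq_zsmul_iff_modEq, ← ZMod.intCast_eq_intCast_iff, hva]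

theorem IsPrimitiveRoot.aeval_pow_eq_zero_of_coprime {K : Type*} [Field K] [CharZero K]
    {ζ : K} {n : ℕ} (hζ : IsPrimitiveRoot ζ n) (hn : 0 < n) {k : ℕ} (hk : k.Coprime n)
    {P : ℚ[X]} (hP : aeval ζ P = 0) : aeval (ζ ^ k) P = 0 := by
  have hmin : minpoly ℚ (ζ ^ k) = minpoly ℚ ζ := by
    rw [← cyclotomic_eq_minpoly_rat hζ hn, ← cyclotomic_eq_minpoly_rat (hζ.pow_of_coprime k hk) hn]
  exact minpoly.dvd_iff.mp (hmin ▸ minpoly.dvd ℚ ζ hP)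

lemma sympForm_nsmul {n : ℕ} (k : ℕ) (a x : ZMod n × ZMod n) :
    sympForm a (k • x) = k • sympForm a x := by
  rw [sympForm, sympForm, Prod.smul_fst, Prod.smul_snd]
  simp only [nsmul_eq_mul]
  ring

section
variable {n : ℕ} [NeZero n]

lemma charVal_eq_stdAddChar (t : ZMod n) : charVal n t = ZMod.stdAddChar t := by
  rw [ZMod.stdAddChar_apply, ZMod.toCircle_apply, charVal]

lemma ZMod.stdAddChar_eq_pow_val (t : ZMod n) :
    ZMod.stdAddChar t = ZMod.stdAddChar (1 : ZMod n) ^ t.val := by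
  rw [← AddChar.map_nsmul_eq_pow, nsmul_eq_mul, mul_one, ZMod.natCast_zmod_val]

lemma ZMod.isPrimitiveRoot_stdAddChar_one :
    IsPrimitiveRoot (ZMod.stdAddChar (1 : ZMod n)) n := by
  have h := ZMod.stdAddChar_coe (N := n) 1
  push_cast at h
  rw [h, mul_one]
  exact Complex.isPrimitiveRoot_exp n (NeZero.ne n)

noncomputable def symFTPoly (A : Set (ZMod n × ZMod n)) (ξ : ZMod n × ZMod n) : ℚ[X] :=
  ∑ a ∈ A.toFinset, X ^ (sympForm a ξ).val

lemma symFT_nsmul_eq_aeval (A : Set (ZMod n × ZMod n)) (k : ℕ) (ξ : ZMod n × ZMod n) :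
    symFT A (k • ξ) = aeval (ZMod.stdAddChar (1 : ZMod n) ^ k) (symFTPoly A ξ) := by
  rw [symFT, symFTPoly, map_sum, ← finsum_mem_coe_finset, Set.coe_toFinset]
  refine finsum_mem_congr rfl fun a _ => ?_
  rw [map_pow, aeval_X, charVal_eq_stdAddChar, sympForm_nsmul, AddChar.map_nsmul_eq_pow,
    ZMod.stdAddChar_eq_pow_val, ← pow_mul, ← pow_mul, mul_comm]

end

theorem symFT_zero_of_same_zmultiples (n : ℕ) (hn : 0 < n)
    (A : Set (ZMod n × ZMod n)) (h h' : ZMod n × ZMod n)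
    (hgen : AddSubgroup.zmultiples h = AddSubgroup.zmultiples h')
    (hz : symFT A h = 0) : symFT A h' = 0 := by
  have : NeZero n := ⟨hn.ne'⟩
  have hnh : n • h = 0 := by
    ext <;> simp [nsmul_eq_mul]
  obtain ⟨k, hk, rfl⟩ := exists_coprime_nsmul_eq_of_zmultiples_eq hnh hgen
  rw [← one_nsmul h, symFT_nsmul_eq_aeval, pow_one] at hz
  rw [symFT_nsmul_eq_aeval]
  exact ZMod.isPrimitiveRoot_stdAddChar_one.aeval_pow_eq_zero_of_coprime hn hk hz
end

section
/- Let H be a subgroup of Z_n × Z_n and A ⊆ Z_n × Z_n. Then A ⊕ H = Z_n × Z_n if and only if |A| · |H| = n² and Δ(H^{⊥s}) ⊆ Z(1̂_A^{sym}). -/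
open Complex
open scoped Classical

lemma charVal_zero (n : ℕ) : charVal n 0 = 1 := by
  simp [charVal]

lemma charVal_pow (n : ℕ) [NeZero n] (t : ZMod n) :
    charVal n t = Complex.exp (2 * Real.pi * Complex.I / n) ^ t.val := by
  rw [charVal, ← Complex.exp_nat_mul]
  congr 1
  ring

lemma charVal_add (n : ℕ) [NeZero n] (s t : ZMod n) :
    charVal n (s + t) = charVal n s * charVal n t := by
  have hζ : Complex.exp (2 * Real.pi * Complex.I / n) ^ n = 1 :=
    (Complex.isPrimitiveRoot_exp n (NeZero.ne n)).pow_eq_one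
  rw [charVal_pow, charVal_pow, charVal_pow, ← pow_add, ZMod.val_add]
  exact (pow_eq_pow_mod _ hζ).symm

lemma charVal_ne_one (n : ℕ) [NeZero n] {t : ZMod n} (ht : t ≠ 0) : charVal n t ≠ 1 := by
  intro h
  rw [charVal_pow] at h
  have := ((Complex.isPrimitiveRoot_exp n (NeZero.ne n)).pow_eq_one_iff_dvd _).mp h
  have h0 : t.val = 0 := Nat.eq_zero_of_dvd_of_lt this (ZMod.val_lt t)
  exact ht ((ZMod.val_eq_zero t).mp h0)

lemma sympForm_add_left {n : ℕ} (x y z : ZMod n × ZMod n) :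
    sympForm (x + y) z = sympForm x z + sympForm y z := by
  simp only [sympForm, Prod.fst_add, Prod.snd_add]; ring

lemma sympForm_add_right {n : ℕ} (x y z : ZMod n × ZMod n) :
    sympForm x (y + z) = sympForm x y + sympForm x z := by
  simp only [sympForm, Prod.fst_add, Prod.snd_add]; ring

lemma sympForm_sub_left {n : ℕ} (x y z : ZMod n × ZMod n) :
    sympForm (x - y) z = sympForm x z - sympForm y z := by
  simp only [sympForm, Prod.fst_sub, Prod.snd_sub]; ring

lemma sympForm_neg_left {n : ℕ} (x y : ZMod n × ZMod n) :
    sympForm (-x) y = -sympForm x y := by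
  simp only [sympForm, Prod.fst_neg, Prod.snd_neg]; ring

lemma sympForm_swap {n : ℕ} (x y : ZMod n × ZMod n) :
    sympForm x y = -sympForm y x := by
  simp only [sympForm]; ring

lemma sympForm_zero_right {n : ℕ} (x : ZMod n × ZMod n) : sympForm x 0 = 0 := by
  simp [sympForm]

lemma sympForm_zero_left {n : ℕ} (x : ZMod n × ZMod n) : sympForm 0 x = 0 := by
  simp [sympForm]

lemma sympForm_nondeg {n : ℕ} {x : ZMod n × ZMod n} (h : ∀ y, sympForm x y = 0) : x = 0 := by
  have h1 := h (0, 1)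
  have h2 := h (1, 0)
  simp [sympForm] at h1 h2
  exact Prod.ext h1 h2

/-- Shift trick: if composing with a self-equivalence shifts `φ` by a nonzero constant,
the character sum vanishes. -/
lemma sum_char_shift {n : ℕ} [NeZero n] {α : Type*} [Fintype α] (e : α ≃ α)
    (φ : α → ZMod n) {c : ZMod n} (hshift : ∀ a, φ (e a) = φ a + c) (hc : c ≠ 0) :
    ∑ a, charVal n (φ a) = 0 := by
  have h1 : ∑ a, charVal n (φ (e a)) = ∑ a, charVal n (φ a) :=
    Equiv.sum_comp e fun a => charVal n (φ a)
  have h2 : ∑ a, charVal n (φ (e a)) = (∑ a, charVal n (φ a)) * charVal n c := by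
    rw [Finset.sum_mul]
    exact Finset.sum_congr rfl fun a _ => by rw [hshift, charVal_add]
  have h3 : (∑ a, charVal n (φ a)) * (charVal n c - 1) = 0 := by
    rw [mul_sub, mul_one, ← h2, h1, sub_self]
  rcases mul_eq_zero.mp h3 with h | h
  · exact h
  · exact absurd (sub_eq_zero.mp h) (charVal_ne_one n hc)

/-- Character sum over the whole group. -/
lemma sum_char_univ {n : ℕ} [NeZero n] (x : ZMod n × ZMod n) :
    ∑ g : ZMod n × ZMod n, charVal n (sympForm x g) =
      if x = 0 then ((n : ℂ) ^ 2) else 0 := by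
  split_ifs with h
  · subst h
    simp [sympForm_zero_left, charVal_zero, Finset.card_univ, ZMod.card]
    ring
  · have : ¬ ∀ y, sympForm x y = 0 := fun hy => h (sympForm_nondeg hy)
    push_neg at this
    obtain ⟨g₀, hg₀⟩ := this
    exact sum_char_shift (Equiv.addRight g₀) (fun g => sympForm x g)
      (fun g => by simp [sympForm_add_right]) hg₀

/-- Character sum over a set closed under addition. -/
lemma sum_char_set {n : ℕ} [NeZero n] (S : Set (ZMod n × ZMod n))
    (hadd : ∀ a ∈ S, ∀ b ∈ S, a + b ∈ S) (x : ZMod n × ZMod n) :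
    ∑ w : S, charVal n (sympForm x (w : ZMod n × ZMod n)) =
      if ∀ w ∈ S, sympForm x w = 0 then (Nat.card S : ℂ) else 0 := by
  split_ifs with h
  · rw [Nat.card_eq_fintype_card]
    rw [Finset.sum_congr rfl fun (w : S) _ => by
      rw [h w w.2, charVal_zero]]
    simp
  · push_neg at h
    obtain ⟨w₀, hw₀S, hw₀⟩ := h
    have hinj : Function.Injective (fun w : S => (⟨(w : ZMod n × ZMod n) + w₀,
        hadd _ w.2 _ hw₀S⟩ : S)) := by
      intro a b hab
      simpa [Subtype.ext_iff] using hab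
    have hbij := (Finite.injective_iff_bijective).mp hinj
    exact sum_char_shift (Equiv.ofBijective _ hbij)
      (fun w : S => sympForm x (w : ZMod n × ZMod n))
      (fun w => by simp [Equiv.ofBijective, sympForm_add_right]) hw₀

lemma symFT_eq {n : ℕ} [NeZero n] (A : Set (ZMod n × ZMod n)) (ξ : ZMod n × ZMod n) :
    symFT A ξ = ∑ a : A, charVal n (sympForm (a : ZMod n × ZMod n) ξ) := by
  rw [symFT, finsum_mem_eq_toFinset_sum]
  exact (Finset.sum_set_coe _).symm

lemma symFT_zero {n : ℕ} [NeZero n] (A : Set (ZMod n × ZMod n)) :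
    symFT A 0 = (Nat.card A : ℂ) := by
  rw [symFT_eq, Nat.card_eq_fintype_card]
  simp [sympForm_zero_right, charVal_zero]

lemma sympForm_neg_left_eq {n : ℕ} (x y : ZMod n × ZMod n) :
    sympForm (-x) y = sympForm y x := by
  rw [sympForm_neg_left, sympForm_swap, neg_neg]

theorem tiling_with_subgroup_iff (n : ℕ) (hn : 0 < n)
    (H : AddSubgroup (ZMod n × ZMod n)) (A : Set (ZMod n × ZMod n)) :
    IsTilingPair A (H : Set (ZMod n × ZMod n)) ↔
      (Nat.card A * Nat.card H = n ^ 2 ∧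
        ∀ d ∈ diffSet (sympPerp (H : Set (ZMod n × ZMod n))), symFT A d = 0) := by
  haveI : NeZero n := ⟨hn.ne'⟩
  have hCardG : Fintype.card (ZMod n × ZMod n) = n ^ 2 := by
    rw [Fintype.card_prod, ZMod.card, sq]
  have hHcoe : Nat.card (H : Set (ZMod n × ZMod n)) = Nat.card H := rfl
  haveI : Nonempty (H : Set (ZMod n × ZMod n)) := ⟨⟨0, H.zero_mem⟩⟩
  have hK0 : (0 : ZMod n × ZMod n) ∈ sympPerp (H : Set (ZMod n × ZMod n)) :=
    fun h _ => sympForm_zero_left h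
  constructor
  · -- tiling → conditions
    intro hT
    have hbij : Function.Bijective
        (fun p : ↥A × ↥(H : Set (ZMod n × ZMod n)) =>
          (p.1 : ZMod n × ZMod n) + p.2) := by
      constructor
      · rintro ⟨a, h⟩ ⟨b, h'⟩ he
        simp only at he
        have h1 : ((a : ZMod n × ZMod n), (h : ZMod n × ZMod n)).1 ∈ A ∧
            ((a : ZMod n × ZMod n), (h : ZMod n × ZMod n)).2 ∈ (H : Set _) ∧
            ((a : ZMod n × ZMod n), (h : ZMod n × ZMod n)).1 +
              ((a : ZMod n × ZMod n), (h : ZMod n × ZMod n)).2 = (a : ZMod n × ZMod n) + h :=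
          ⟨a.2, h.2, rfl⟩
        have h2 : ((b : ZMod n × ZMod n), (h' : ZMod n × ZMod n)).1 ∈ A ∧
            ((b : ZMod n × ZMod n), (h' : ZMod n × ZMod n)).2 ∈ (H : Set _) ∧
            ((b : ZMod n × ZMod n), (h' : ZMod n × ZMod n)).1 +
              ((b : ZMod n × ZMod n), (h' : ZMod n × ZMod n)).2 = (a : ZMod n × ZMod n) + h :=
          ⟨b.2, h'.2, he.symm⟩
        have := (hT ((a : ZMod n × ZMod n) + h)).unique h1 h2
        have hfst := congrArg Prod.fst this
        have hsnd := congrArg Prod.snd this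
        exact Prod.ext (Subtype.ext hfst) (Subtype.ext hsnd)
      · intro g
        obtain ⟨pr, ⟨hA, hH, hsum⟩, _⟩ := hT g
        exact ⟨(⟨pr.1, hA⟩, ⟨pr.2, hH⟩), hsum⟩
    constructor
    · have hc := Nat.card_eq_of_bijective _ hbij
      rw [Nat.card_prod, hHcoe] at hc
      rw [hc, Nat.card_eq_fintype_card, hCardG]
    · rintro d ⟨s, hs, s', hs', hne, rfl⟩
      have hd0 : s - s' ≠ 0 := sub_ne_zero.mpr hne
      have hx0 : -(s - s') ≠ 0 := neg_ne_zero.mpr hd0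
      have hsum0 : ∑ g : ZMod n × ZMod n, charVal n (sympForm (-(s - s')) g) = 0 := by
        rw [sum_char_univ, if_neg hx0]
      have hre : ∑ p : ↥A × ↥(H : Set (ZMod n × ZMod n)),
          charVal n (sympForm (-(s - s')) ((p.1 : ZMod n × ZMod n) + p.2))
          = ∑ g : ZMod n × ZMod n, charVal n (sympForm (-(s - s')) g) :=
        Fintype.sum_bijective _ hbij _ _ (fun p => rfl)
      have heval : ∑ p : ↥A × ↥(H : Set (ZMod n × ZMod n)),
          charVal n (sympForm (-(s - s')) ((p.1 : ZMod n × ZMod n) + p.2))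
          = (Nat.card H : ℂ) * symFT A (s - s') := by
        rw [Fintype.sum_prod_type]
        have hstep : ∀ a : ↥A,
            ∀ h : ↥(H : Set (ZMod n × ZMod n)),
            charVal n (sympForm (-(s - s')) ((a : ZMod n × ZMod n) + h))
              = charVal n (sympForm ((a : ZMod n × ZMod n)) (s - s')) := by
          intro a h
          have hph : sympForm (-(s - s')) (h : ZMod n × ZMod n) = 0 := by
            rw [sympForm_neg_left_eq, sympForm_swap, sympForm_sub_left,
              hs _ h.2, hs' _ h.2, sub_self, neg_zero]
          rw [sympForm_add_right, hph, add_zero, sympForm_neg_left_eq]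
        calc ∑ a : ↥A, ∑ h : ↥(H : Set (ZMod n × ZMod n)),
              charVal n (sympForm (-(s - s')) ((a : ZMod n × ZMod n) + h))
            = ∑ a : ↥A, ∑ _h : ↥(H : Set (ZMod n × ZMod n)),
              charVal n (sympForm ((a : ZMod n × ZMod n)) (s - s')) :=
              Finset.sum_congr rfl fun a _ => Finset.sum_congr rfl fun h _ => hstep a h
          _ = ∑ a : ↥A,
              (Nat.card H : ℂ) * charVal n (sympForm ((a : ZMod n × ZMod n)) (s - s')) := by
              refine Finset.sum_congr rfl fun a _ => ?_
              rw [Finset.sum_const, Finset.card_univ, nsmul_eq_mul, ← hHcoe,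
                Nat.card_eq_fintype_card]
          _ = (Nat.card H : ℂ) * symFT A (s - s') := by
              rw [← Finset.mul_sum, symFT_eq]
      have hHpos : (0 : ℕ) < Nat.card H := Nat.card_pos
      have : (Nat.card H : ℂ) * symFT A (s - s') = 0 := by rw [← heval, hre, hsum0]
      rcases mul_eq_zero.mp this with h | h
      · exact absurd h (by exact_mod_cast hHpos.ne')
      · exact h
  · rintro ⟨h1, h2⟩
    have hHadd : ∀ a ∈ (H : Set (ZMod n × ZMod n)), ∀ b ∈ (H : Set (ZMod n × ZMod n)),
        a + b ∈ (H : Set (ZMod n × ZMod n)) := fun a ha b hb => H.add_mem ha hb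
    have hKadd : ∀ a ∈ sympPerp (H : Set (ZMod n × ZMod n)),
        ∀ b ∈ sympPerp (H : Set (ZMod n × ZMod n)),
        a + b ∈ sympPerp (H : Set (ZMod n × ZMod n)) := by
      intro a ha b hb h hh
      rw [sympForm_add_left, ha h hh, hb h hh, add_zero]
    -- Step 1: |K| * |H| = n ^ 2 by double counting
    have dc1 : ∑ g : ZMod n × ZMod n, ∑ h : ↥(H : Set (ZMod n × ZMod n)),
        charVal n (sympForm g (h : ZMod n × ZMod n))
        = (Nat.card (sympPerp (H : Set (ZMod n × ZMod n))) : ℂ) * Nat.card H := by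
      have hptw : ∀ g : ZMod n × ZMod n, ∑ h : ↥(H : Set (ZMod n × ZMod n)),
          charVal n (sympForm g (h : ZMod n × ZMod n))
          = if g ∈ sympPerp (H : Set (ZMod n × ZMod n)) then (Nat.card H : ℂ) else 0 := by
        intro g
        rw [sum_char_set _ hHadd g, hHcoe]
        exact if_congr Iff.rfl rfl rfl
      rw [Finset.sum_congr rfl fun g _ => hptw g]
      calc ∑ g : ZMod n × ZMod n,
            (if g ∈ sympPerp (H : Set (ZMod n × ZMod n)) then (Nat.card H : ℂ) else 0)
          = ∑ g : ZMod n × ZMod n,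
            (if g ∈ (sympPerp (H : Set (ZMod n × ZMod n))).toFinset
              then (Nat.card H : ℂ) else 0) := by
            refine Finset.sum_congr rfl fun g _ => ?_
            simp only [Set.mem_toFinset]
        _ = ∑ _g ∈ (sympPerp (H : Set (ZMod n × ZMod n))).toFinset, (Nat.card H : ℂ) := by
            rw [Finset.sum_ite_mem, Finset.univ_inter]
        _ = ((sympPerp (H : Set (ZMod n × ZMod n))).toFinset.card : ℂ) * Nat.card H := by
            rw [Finset.sum_const, nsmul_eq_mul]
        _ = (Nat.card (sympPerp (H : Set (ZMod n × ZMod n))) : ℂ) * Nat.card H := by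
            simp [Set.toFinset_card, Nat.card_eq_fintype_card]
    have dc2 : ∑ h : ↥(H : Set (ZMod n × ZMod n)), ∑ g : ZMod n × ZMod n,
        charVal n (sympForm g (h : ZMod n × ZMod n)) = ((n : ℂ) ^ 2) := by
      have hptw : ∀ h : ↥(H : Set (ZMod n × ZMod n)), ∑ g : ZMod n × ZMod n,
          charVal n (sympForm g (h : ZMod n × ZMod n))
          = if -(h : ZMod n × ZMod n) = 0 then ((n : ℂ) ^ 2) else 0 := by
        intro h
        rw [← sum_char_univ (-(h : ZMod n × ZMod n))]
        exact Finset.sum_congr rfl fun g _ => by rw [sympForm_neg_left_eq]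
      rw [Finset.sum_congr rfl fun h _ => hptw h]
      rw [Finset.sum_eq_single_of_mem
        (⟨0, H.zero_mem⟩ : ↥(H : Set (ZMod n × ZMod n))) (Finset.mem_univ _)]
      · rw [if_pos (by simp)]
      · intro b _ hb
        rw [if_neg]
        intro hb0
        exact hb (Subtype.ext (by simpa using hb0))
    have hKH : Nat.card (sympPerp (H : Set (ZMod n × ZMod n))) * Nat.card H = n ^ 2 := by
      have hc : (↑(Nat.card (sympPerp (H : Set (ZMod n × ZMod n))) * Nat.card H) : ℂ)
          = ((n ^ 2 : ℕ) : ℂ) := by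
        push_cast
        rw [← dc1, Finset.sum_comm, dc2]
      exact_mod_cast hc
    have hHpos : (0 : ℕ) < Nat.card H := Nat.card_pos
    have hAK : Nat.card A = Nat.card (sympPerp (H : Set (ZMod n × ZMod n))) :=
      Nat.eq_of_mul_eq_mul_right hHpos (h1.trans hKH.symm)
    have hApos : (0 : ℕ) < Nat.card A := by
      rcases Nat.eq_zero_or_pos (Nat.card A) with h | h
      · rw [h, zero_mul] at h1
        exact absurd h1.symm (by positivity)
      · exact h
    -- Step 2: the T computation
    have hKvanish : ∀ k ∈ sympPerp (H : Set (ZMod n × ZMod n)), k ≠ 0 → symFT A k = 0 :=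
      fun k hk hk0 => h2 k ⟨k, hk, 0, hK0, hk0, (sub_zero k).symm⟩
    have hT1 : ∑ k : ↥(sympPerp (H : Set (ZMod n × ZMod n))),
        symFT A (k : ZMod n × ZMod n) * symFT A (-(k : ZMod n × ZMod n))
        = (Nat.card A : ℂ) * Nat.card A := by
      rw [Finset.sum_eq_single_of_mem
        (⟨0, hK0⟩ : ↥(sympPerp (H : Set (ZMod n × ZMod n)))) (Finset.mem_univ _)]
      · simp only [neg_zero]
        rw [symFT_zero]
      · intro b _ hb
        have hb0 : (b : ZMod n × ZMod n) ≠ 0 := fun h => hb (Subtype.ext h)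
        rw [hKvanish b b.2 hb0, zero_mul]
    have hT2 : ∑ k : ↥(sympPerp (H : Set (ZMod n × ZMod n))),
        symFT A (k : ZMod n × ZMod n) * symFT A (-(k : ZMod n × ZMod n))
        = ∑ p : ↥A × ↥A,
          (if ((p.1 : ZMod n × ZMod n) - p.2) ∈ sympPerp (sympPerp (H : Set (ZMod n × ZMod n)))
            then (Nat.card (sympPerp (H : Set (ZMod n × ZMod n))) : ℂ) else 0) := by
      calc ∑ k : ↥(sympPerp (H : Set (ZMod n × ZMod n))),
            symFT A (k : ZMod n × ZMod n) * symFT A (-(k : ZMod n × ZMod n))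
          = ∑ k : ↥(sympPerp (H : Set (ZMod n × ZMod n))), ∑ p : ↥A × ↥A,
            charVal n (sympForm ((p.1 : ZMod n × ZMod n) - p.2) (k : ZMod n × ZMod n)) := by
            refine Finset.sum_congr rfl fun k _ => ?_
            rw [symFT_eq, symFT_eq, Finset.sum_mul_sum, Fintype.sum_prod_type]
            refine Finset.sum_congr rfl fun a _ => Finset.sum_congr rfl fun b _ => ?_
            rw [← charVal_add]
            congr 1
            rw [sympForm_sub_left]
            have : sympForm (b : ZMod n × ZMod n) (-(k : ZMod n × ZMod n))
                = -sympForm (b : ZMod n × ZMod n) (k : ZMod n × ZMod n) := by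
              rw [sympForm_swap, sympForm_neg_left, sympForm_swap
                (b : ZMod n × ZMod n) (k : ZMod n × ZMod n), neg_neg]
            rw [this]
            ring
        _ = ∑ p : ↥A × ↥A, ∑ k : ↥(sympPerp (H : Set (ZMod n × ZMod n))),
            charVal n (sympForm ((p.1 : ZMod n × ZMod n) - p.2) (k : ZMod n × ZMod n)) :=
            Finset.sum_comm
        _ = _ := by
            refine Finset.sum_congr rfl fun p _ => ?_
            rw [sum_char_set _ hKadd]
            exact if_congr Iff.rfl rfl rfl
    have hNcard : Fintype.card {p : ↥A × ↥A //
        ((p.1 : ZMod n × ZMod n) - p.2) ∈ sympPerp (sympPerp (H : Set (ZMod n × ZMod n)))}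
        = Nat.card A := by
      have hT3 : (∑ p : ↥A × ↥A,
          (if ((p.1 : ZMod n × ZMod n) - p.2) ∈ sympPerp (sympPerp (H : Set (ZMod n × ZMod n)))
            then (Nat.card (sympPerp (H : Set (ZMod n × ZMod n))) : ℂ) else 0))
          = (Fintype.card {p : ↥A × ↥A //
            ((p.1 : ZMod n × ZMod n) - p.2) ∈ sympPerp (sympPerp (H : Set (ZMod n × ZMod n)))} : ℂ)
            * (Nat.card (sympPerp (H : Set (ZMod n × ZMod n))) : ℂ) := by
        rw [Finset.sum_ite, Finset.sum_const_zero, add_zero, Finset.sum_const, nsmul_eq_mul,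
          Fintype.card_subtype]
      have heq : (Nat.card A : ℂ) * Nat.card A
          = (Fintype.card {p : ↥A × ↥A //
            ((p.1 : ZMod n × ZMod n) - p.2) ∈ sympPerp (sympPerp (H : Set (ZMod n × ZMod n)))} : ℂ)
            * (Nat.card A : ℂ) := by
        rw [← hT1, hT2, hT3, ← hAK]
      have hAne : (Nat.card A : ℂ) ≠ 0 := by exact_mod_cast hApos.ne'
      have := mul_right_cancel₀ hAne heq
      exact_mod_cast this.symm
    -- Step 3: separation
    have hsep : ∀ a ∈ A, ∀ b ∈ A,
        a - b ∈ sympPerp (sympPerp (H : Set (ZMod n × ZMod n))) → a = b := by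
      have h0mem : ∀ a : ↥A, ((a : ZMod n × ZMod n) - a)
          ∈ sympPerp (sympPerp (H : Set (ZMod n × ZMod n))) := by
        intro a
        rw [sub_self]
        exact fun k _ => sympForm_zero_left k
      have hdiaginj : Function.Injective (fun a : ↥A =>
          (⟨(a, a), h0mem a⟩ : {p : ↥A × ↥A //
            ((p.1 : ZMod n × ZMod n) - p.2)
              ∈ sympPerp (sympPerp (H : Set (ZMod n × ZMod n)))})) := by
        intro a b hab
        have := congrArg (fun x => x.1.1) hab
        exact this
      have hdiagbij := (Fintype.bijective_iff_injective_and_card _).mpr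
        ⟨hdiaginj, by rw [hNcard, Nat.card_eq_fintype_card]⟩
      intro a ha b hb hab
      obtain ⟨c, hc⟩ := hdiagbij.2 ⟨(⟨a, ha⟩, ⟨b, hb⟩), hab⟩
      have hval := Subtype.ext_iff.mp hc
      have h1' := congrArg Prod.fst hval
      have h2' := congrArg Prod.snd hval
      simp only at h1' h2'
      have : a = (c : ZMod n × ZMod n) := (congrArg Subtype.val h1').symm
      have hbc : b = (c : ZMod n × ZMod n) := (congrArg Subtype.val h2').symm
      rw [this, hbc]
    have hHsub : ∀ h ∈ (H : Set (ZMod n × ZMod n)),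
        h ∈ sympPerp (sympPerp (H : Set (ZMod n × ZMod n))) := by
      intro h hh k hk
      rw [sympForm_swap, hk h hh, neg_zero]
    -- Step 4: build the tiling
    have hinj : Function.Injective
        (fun p : ↥A × ↥(H : Set (ZMod n × ZMod n)) =>
          (p.1 : ZMod n × ZMod n) + p.2) := by
      rintro ⟨a, h⟩ ⟨b, h'⟩ he
      simp only at he
      have hd : (a : ZMod n × ZMod n) - b = (h' : ZMod n × ZMod n) - h := by
        have := he
        linear_combination this
      have hdH : (a : ZMod n × ZMod n) - b ∈ (H : Set (ZMod n × ZMod n)) := by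
        rw [hd]
        exact H.sub_mem h'.2 h.2
      have hab : (a : ZMod n × ZMod n) = b := hsep _ a.2 _ b.2 (hHsub _ hdH)
      have hhh : (h : ZMod n × ZMod n) = h' := by
        have := he
        rw [hab] at this
        exact add_left_cancel this
      exact Prod.ext (Subtype.ext hab) (Subtype.ext hhh)
    have hcards : Fintype.card (↥A × ↥(H : Set (ZMod n × ZMod n)))
        = Fintype.card (ZMod n × ZMod n) := by
      rw [Fintype.card_prod, hCardG, ← Nat.card_eq_fintype_card, ← Nat.card_eq_fintype_card,
        hHcoe, h1]
    have hbij := (Fintype.bijective_iff_injective_and_card _).mpr ⟨hinj, hcards⟩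
    intro g
    obtain ⟨p, hp⟩ := hbij.2 g
    refine ⟨((p.1 : ZMod n × ZMod n), (p.2 : ZMod n × ZMod n)), ⟨p.1.2, p.2.2, hp⟩, ?_⟩
    rintro ⟨q1, q2⟩ ⟨hq1, hq2, hq⟩
    have hqe : ((⟨q1, hq1⟩, ⟨q2, hq2⟩) : ↥A × ↥(H : Set (ZMod n × ZMod n))) = p :=
      hinj (by simpa using hq.trans hp.symm)
    rw [← hqe]
end
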